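/- With the notation of the context, for every particle array v ∈ Z^{T·M} and every index path k ∈ {1,…,M}^T one has b^{(1)}_{θ,ϑ}(k | v) · r_{𝟏,v}(θ,ϑ) = b_{θ,ϑ}(k | v) · r_{v^{(𝟏)},v^{(k)}}(θ,ϑ); that is, the weighted selection probabilities b^{(1)}_{θ,ϑ} are obtained by reweighting the selection probabilities b_{θ,ϑ} by the corresponding acceptance ratios, normalised by the averaged ratio r_{𝟏,v}(θ,ϑ). -/

import Mathlib

/-!
Per coordinate `t`, multiplying the `b_{θ,ϑ}`-weight of `v_t^{(k_t)}` by the acceptance-ratio factor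
turns `γ_{θ,ϑ}/q` into `γ_ϑ/q`, so `b_{θ,ϑ}(k|v) r_{z,v^{(k)}}` equals `b^{(1)}_{θ,ϑ}(k|v)` times a
constant `c` that does not depend on `k` (the ratio of the two normalisers and the `z`-part of `r`).
Summing over `k`, and using that `b^{(1)}_{θ,ϑ}(·|v)` is a probability on index paths, gives
`r_{𝟏,v} = c`.
-/

open MeasureTheory Finset

namespace MHAARRB6

variable {Z : Type*}

/-- The path `v^{(k)}` extracted from the particle array `v`. -/
def pathOf (n m : ℕ) (v : Fin (n + 1) → Fin (m + 1) → Z)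
    (k : Fin (n + 1) → Fin (m + 1)) : Fin (n + 1) → Z := fun t => v t (k t)

/-- The constant index path `𝟏`. -/
def onePath (n m : ℕ) : Fin (n + 1) → Fin (m + 1) := fun _ => 0

/-- Selection probabilities: this gives `b_{θ,ϑ}` for `γ = γ_{θ,ϑ}` and
`b^{(1)}_{θ,ϑ}` for `γ = γ_ϑ`. -/
noncomputable def bSel (n m : ℕ) (γ qp : Fin (n + 1) → Z → ℝ)
    (k : Fin (n + 1) → Fin (m + 1)) (v : Fin (n + 1) → Fin (m + 1) → Z) : ℝ :=
  ∏ t, (γ t (v t (k t)) / qp t (v t (k t))) / (∑ j, γ t (v t j) / qp t (v t j))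

/-- The acceptance ratio `r_{z,z'}(θ,ϑ)`. -/
noncomputable def accRatio (n : ℕ) (ηθ ηϑ qθϑ qϑθ : ℝ)
    (γθ γϑ γθϑ : Fin (n + 1) → Z → ℝ) (z z' : Fin (n + 1) → Z) : ℝ :=
  qϑθ * ηϑ / (qθϑ * ηθ) *
    ∏ t, (γθϑ t (z t) / γθ t (z t)) * (γϑ t (z' t) / γθϑ t (z' t))

/-- The averaged ratio `r_{𝟏,v}(θ,ϑ) = ∑_k b_{θ,ϑ}(k|v) r_{v^{(𝟏)},v^{(k)}}(θ,ϑ)`. -/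
noncomputable def rBar (n m : ℕ) (ηθ ηϑ qθϑ qϑθ : ℝ)
    (γθ γϑ γθϑ qp : Fin (n + 1) → Z → ℝ)
    (l : Fin (n + 1) → Fin (m + 1)) (v : Fin (n + 1) → Fin (m + 1) → Z) : ℝ :=
  ∑ k : Fin (n + 1) → Fin (m + 1),
    bSel n m γθϑ qp k v *
      accRatio n ηθ ηϑ qθϑ qϑθ γθ γϑ γθϑ (pathOf n m v l) (pathOf n m v k)

theorem sum_pi_prod_div_sum_eq_one {ι κ : Type*} [Fintype ι] [DecidableEq ι] [Fintype κ]
    (f : ι → κ → ℝ) (hf : ∀ i, ∑ j, f i j ≠ 0) :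
    ∑ k : ι → κ, ∏ i, f i (k i) / ∑ j, f i j = 1 := by
  rw [← Fintype.prod_sum fun i j => f i j / ∑ j, f i j]
  exact prod_eq_one fun i _ => by rw [← sum_div, div_self (hf i)]

theorem sum_weight_ne_zero {n m : ℕ} {γ qp : Fin (n + 1) → Z → ℝ}
    (hγ : ∀ t z, 0 < γ t z) (hqp : ∀ t z, 0 < qp t z)
    (v : Fin (n + 1) → Fin (m + 1) → Z) (t : Fin (n + 1)) :
    ∑ j, γ t (v t j) / qp t (v t j) ≠ 0 :=
  (sum_pos (fun _ _ => div_pos (hγ _ _) (hqp _ _)) univ_nonempty).ne'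

theorem sum_bSel_eq_one (n m : ℕ) {γ qp : Fin (n + 1) → Z → ℝ}
    (hγ : ∀ t z, 0 < γ t z) (hqp : ∀ t z, 0 < qp t z) (v : Fin (n + 1) → Fin (m + 1) → Z) :
    ∑ k, bSel n m γ qp k v = 1 :=
  sum_pi_prod_div_sum_eq_one _ (sum_weight_ne_zero hγ hqp v)

theorem div_div_mul_reweight {a b p s u g : ℝ} (ha : a ≠ 0) (hu : u ≠ 0) :
    a / p / s * (g * (b / a)) = b / p / u * (g * (u / s)) := by
  field_simp

theorem exists_bSel_mul_accRatio_eq_bSel_mul (n m : ℕ) (ηθ ηϑ qθϑ qϑθ : ℝ)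
    {γθ γϑ γθϑ qp : Fin (n + 1) → Z → ℝ}
    (hγϑ : ∀ t z, 0 < γϑ t z) (hγθϑ : ∀ t z, γθϑ t z ≠ 0) (hqp : ∀ t z, 0 < qp t z)
    (v : Fin (n + 1) → Fin (m + 1) → Z) (z : Fin (n + 1) → Z) :
    ∃ c, ∀ k, bSel n m γθϑ qp k v * accRatio n ηθ ηϑ qθϑ qϑθ γθ γϑ γθϑ z (pathOf n m v k)
      = bSel n m γϑ qp k v * c := by
  refine ⟨qϑθ * ηϑ / (qθϑ * ηθ) * ∏ t, γθϑ t (z t) / γθ t (z t) *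
    ((∑ j, γϑ t (v t j) / qp t (v t j)) / ∑ j, γθϑ t (v t j) / qp t (v t j)), fun k => ?_⟩
  simp only [bSel, accRatio, pathOf, mul_left_comm _ (qϑθ * ηϑ / (qθϑ * ηθ)),
    ← prod_mul_distrib]
  exact congrArg _ <| prod_congr rfl fun t _ =>
    div_div_mul_reweight (hγθϑ _ _) (sum_weight_ne_zero hγϑ hqp v t)

theorem weighted_selection_identity_general
    (n m : ℕ)
    (γθ γϑ γθϑ qp : Fin (n + 1) → Z → ℝ)
    (hγϑ : ∀ t z, 0 < γϑ t z)
    (hγθϑ : ∀ t z, 0 < γθϑ t z) (hqp : ∀ t z, 0 < qp t z)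
    (ηθ ηϑ qθϑ qϑθ : ℝ)
    (v : Fin (n + 1) → Fin (m + 1) → Z) (k : Fin (n + 1) → Fin (m + 1)) :
    bSel n m γϑ qp k v * rBar n m ηθ ηϑ qθϑ qϑθ γθ γϑ γθϑ qp (onePath n m) v
      = bSel n m γθϑ qp k v *
          accRatio n ηθ ηϑ qθϑ qϑθ γθ γϑ γθϑ
            (pathOf n m v (onePath n m)) (pathOf n m v k) := by
  obtain ⟨c, hc⟩ := exists_bSel_mul_accRatio_eq_bSel_mul n m ηθ ηϑ qθϑ qϑθ
    (γθ := γθ) hγϑ (fun t z => (hγθϑ t z).ne') hqp v (pathOf n m v (onePath n m))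
  have hrBar : rBar n m ηθ ηϑ qθϑ qϑθ γθ γϑ γθϑ qp (onePath n m) v = c := by
    rw [rBar, sum_congr rfl fun k _ => hc k, ← sum_mul, sum_bSel_eq_one n m hγϑ hqp v, one_mul]
  rw [hrBar, hc]

/-- For every particle array `v` and index path `k`,
`b^{(1)}_{θ,ϑ}(k|v) · r_{𝟏,v}(θ,ϑ) = b_{θ,ϑ}(k|v) · r_{v^{(𝟏)},v^{(k)}}(θ,ϑ)`:
the weighted selection probabilities `b^{(1)}` arise from reweighting `b` by the
acceptance ratios, normalised by the averaged ratio. -/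
theorem weighted_selection_identity
    [MeasurableSpace Z] (n m : ℕ)
    (γθ γϑ γθϑ qp : Fin (n + 1) → Z → ℝ)
    (hγθm : ∀ t, Measurable (γθ t)) (hγϑm : ∀ t, Measurable (γϑ t))
    (hγθϑm : ∀ t, Measurable (γθϑ t)) (hqpm : ∀ t, Measurable (qp t))
    (hγθ : ∀ t z, 0 < γθ t z) (hγϑ : ∀ t z, 0 < γϑ t z)
    (hγθϑ : ∀ t z, 0 < γθϑ t z) (hqp : ∀ t z, 0 < qp t z)
    (ηθ ηϑ qθϑ qϑθ : ℝ)
    (hηθ : 0 < ηθ) (hηϑ : 0 < ηϑ) (hqθϑ : 0 < qθϑ) (hqϑθ : 0 < qϑθ)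
    (v : Fin (n + 1) → Fin (m + 1) → Z) (k : Fin (n + 1) → Fin (m + 1)) :
    bSel n m γϑ qp k v * rBar n m ηθ ηϑ qθϑ qϑθ γθ γϑ γθϑ qp (onePath n m) v
      = bSel n m γθϑ qp k v *
          accRatio n ηθ ηϑ qθϑ qϑθ γθ γϑ γθϑ
            (pathOf n m v (onePath n m)) (pathOf n m v k) :=
  weighted_selection_identity_general n m γθ γϑ γθϑ qp hγϑ hγθϑ hqp ηθ ηϑ qθϑ qϑθ v k

end MHAARRB6
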